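/- Let K ⊆ F^E be a linear variety, I ⊆ E a set such that the coordinate functionals restricted to the subspace belonging to K and indexed by I are linearly independent, and c ∈ F^I. Then K_I = K ∩ {x : x_e = c_e for all e ∈ I} is a nonempty linear variety, and the matroid of K_I restricted to E \ I equals the contraction by I of the matroid of K: M(K_I) \ I = M(K)/I. -/

import Mathlib

open Matroid in
/-- Deletion of a set from a matroid: restriction to the complement. -/
noncomputable def Matroid.del {α : Type*} (M : Matroid α) (D : Set α) : Matroid α :=
  M ↾ (M.E \ D)

/-- Contraction of a set in a matroid: M/T = (M✶ \ T)✶. -/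
noncomputable def Matroid.con {α : Type*} (M : Matroid α) (T : Set α) : Matroid α :=
  (M✶.del T)✶

/-- The i-th coordinate functional of F^E, restricted to the subspace V. -/
noncomputable def coordFun {F E : Type*} [Field F] (V : Submodule F (E → F)) (i : E) :
    V →ₗ[F] F :=
  (LinearMap.proj i).comp V.subtype

/-- M is the matroid M(K) of a linear variety with associated subspace V: its ground set
is all of E and a set is independent iff the corresponding coordinate functionals
restricted to V are linearly independent. -/
def IsVarietyMatroidOf {F E : Type*} [Field F] (V : Submodule F (E → F)) (M : Matroid E) :
    Prop :=
  M.E = Set.univ ∧ ∀ X : Set E, M.Indep X ↔ LinearIndependent F (fun i : X => coordFun V i)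

-- contraction independence lemma
open Set Matroid in
lemma con_indep_iff' {α : Type*} (M : Matroid α) {I : Set α} (hIind : M.Indep I) (X : Set α) :
    (M.con I).Indep X ↔ M.Indep (X ∪ I) ∧ X ⊆ M.E \ I := by
  have hIE : I ⊆ M.E := hIind.subset_ground
  rw [Matroid.con, Matroid.del, Matroid.dual_indep_iff_exists']
  have hg : (M✶ ↾ (M✶.E \ I)).E = M.E \ I := by
    rw [Matroid.restrict_ground_eq, Matroid.dual_ground]
  rw [hg]
  constructor
  · rintro ⟨hXE, D, hD, hdisj⟩
    rw [Matroid.isBase_restrict_iff'] at hD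
    have hD' : M✶.IsBasis D (M.E \ I) := hD.isBasis (by rw [Matroid.dual_ground]; exact diff_subset)
    obtain ⟨B0, hB0, hB0s⟩ := (Matroid.dual_coindep_iff.2 hIind).exists_isBase_subset_compl
    have hDbase : M✶.IsBase D := hB0.isBase_of_isBasis_superset (by rwa [Matroid.dual_ground] at hB0s) hD'
    have hBase : M.IsBase (M.E \ D) := hDbase.compl_isBase_of_dual
    refine ⟨hBase.indep.subset ?_, hXE⟩
    rintro x (hx | hx)
    · exact ⟨(hXE hx).1, fun hxD => (Set.disjoint_left.1 hdisj) hx hxD⟩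
    · exact ⟨hIE hx, fun hxD => (hD'.subset hxD).2 hx⟩
  · rintro ⟨hind, hXE⟩
    obtain ⟨B, hB, hXIB⟩ := (show M.Indep (X ∪ I) from hind).exists_isBase_superset
    have hDbase : M✶.IsBase (M.E \ B) := hB.compl_isBase_dual
    have hsub : M.E \ B ⊆ M.E \ I := diff_subset_diff_right ((subset_union_right).trans hXIB)
    obtain ⟨D', hD', hDD'⟩ := hDbase.indep.subset_isBasis_of_subset hsub
      (by rw [Matroid.dual_ground]; exact diff_subset)
    have hEq : M.E \ B = D' := hDbase.eq_of_subset_indep hD'.indep hDD'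
    refine ⟨hXE, D', ?_, ?_⟩
    · rw [Matroid.isBase_restrict_iff']
      exact hD'.isBasis'
    · rw [← hEq]
      exact Set.disjoint_left.2 fun a haX haD => haD.2 (hXIB (Or.inl haX))

open Set Submodule in
lemma coord_union_indep_iff {F E : Type*} [Field F] [Fintype E]
    (V VI : Submodule F (E → F)) (I : Set E)
    (hVI : ∀ x, x ∈ VI ↔ x ∈ V ∧ ∀ i ∈ I, x i = 0)
    (hI : LinearIndependent F (fun i : I => coordFun V i))
    (J : Set E) (hJI : Disjoint J I) :
    LinearIndependent F (fun j : J => coordFun VI j) ↔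
      LinearIndependent F (fun k : ↥(J ∪ I) => coordFun V k) := by
  classical
  have hle : VI ≤ V := fun x hx => ((hVI x).1 hx).1
  set incl : VI →ₗ[F] V := Submodule.inclusion hle with hincl
  set R : (↥V →ₗ[F] F) →ₗ[F] (↥VI →ₗ[F] F) := LinearMap.lcomp F F incl with hRdef
  have hR : ∀ j : E, R (coordFun V j) = coordFun VI j := by
    intro j; ext x; rfl
  have hker : LinearMap.ker R = span F (Set.range fun i : I => coordFun V i) := by
    apply le_antisymm
    · intro f hf
      apply mem_span_of_iInf_ker_le_ker (L := fun i : I => coordFun V i)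
      intro v hv
      simp only [Submodule.mem_iInf, LinearMap.mem_ker] at hv ⊢
      have hvVI : (v : E → F) ∈ VI := (hVI v).2 ⟨v.2, fun i hi => hv ⟨i, hi⟩⟩
      have hfv : f (incl ⟨(v : E → F), hvVI⟩) = 0 := by
        have h0 : R f = 0 := LinearMap.mem_ker.1 hf
        calc f (incl ⟨(v : E → F), hvVI⟩) = (R f) ⟨(v : E → F), hvVI⟩ := rfl
          _ = 0 := by rw [h0]; rfl
      have : incl ⟨(v : E → F), hvVI⟩ = v := Subtype.ext rfl
      rwa [this] at hfv
    · rw [span_le]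
      rintro _ ⟨i, rfl⟩
      simp only [SetLike.mem_coe, LinearMap.mem_ker]
      ext x
      exact ((hVI x.1).1 x.2).2 i i.2
  have step1 : LinearIndependent F (fun j : J => coordFun VI j) ↔
      LinearIndependent F (fun j : J => coordFun V j) ∧
      Disjoint (span F (Set.range fun j : J => coordFun V j)) (LinearMap.ker R) := by
    have hcomp : (fun j : J => coordFun VI j) = R ∘ (fun j : J => coordFun V j) := by
      funext j; exact (hR j).symm
    rw [hcomp]
    constructor
    · intro h
      refine ⟨h.of_comp R, ?_⟩
      rw [Submodule.disjoint_def]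
      intro x hx hxk
      haveI : Fintype ↥J := Fintype.ofFinite _
      obtain ⟨cc, rfl⟩ := (mem_span_range_iff_exists_fun F).1 hx
      have h0 : ∑ j, cc j • (R ∘ fun j : J => coordFun V j) j = 0 := by
        have := LinearMap.mem_ker.1 hxk
        simpa [Function.comp, map_sum, map_smul] using this
      have hc0 := Fintype.linearIndependent_iff.1 h cc h0
      simp [hc0]
    · rintro ⟨h1, h2⟩
      exact h1.map h2
  set e : (↥J ⊕ ↥I) ≃ ↥(J ∪ I) := (Equiv.Set.union hJI).symm with he
  have hcomp2 : ((fun k : ↥(J ∪ I) => coordFun V k) ∘ e) =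
      Sum.elim (fun j : J => coordFun V j) (fun i : I => coordFun V i) := by
    funext x; rcases x with j | i <;> rfl
  rw [← linearIndependent_equiv e (f := fun k : ↥(J ∪ I) => coordFun V k), hcomp2,
    linearIndependent_sum, Sum.elim_comp_inl, Sum.elim_comp_inr, step1, hker]
  exact ⟨fun ⟨h1, h2⟩ => ⟨h1, hI, h2⟩, fun ⟨h1, _, h2⟩ => ⟨h1, h2⟩⟩

open Set Submodule in
lemma coord_pi_surjective {F E : Type*} [Field F] [Fintype E] (V : Submodule F (E → F))
    (I : Set E) (hI : LinearIndependent F (fun i : I => coordFun V i)) :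
    Function.Surjective (LinearMap.pi (fun i : I => coordFun V i) : ↥V →ₗ[F] (↥I → F)) := by
  classical
  haveI : Fintype ↥I := Fintype.ofFinite _
  set φ : ↥V →ₗ[F] (↥I → F) := LinearMap.pi (fun i : I => coordFun V i) with hφ
  rw [← LinearMap.range_eq_top]
  by_contra hne
  obtain ⟨f, hf0, hfmap⟩ := Submodule.exists_dual_map_eq_bot_of_lt_top
    (lt_top_iff_ne_top.2 hne) inferInstance
  set b : ↥I → F := fun i => f (Pi.single i 1) with hb
  have hfx : ∀ x : ↥I → F, f x = ∑ i, x i * b i := by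
    intro x
    conv_lhs => rw [pi_eq_sum_univ x]
    rw [map_sum]
    refine Finset.sum_congr rfl fun i _ => ?_
    rw [map_smul, smul_eq_mul]
    congr 2
    ext j
    simp [Pi.single_apply, eq_comm]
  have hcomb : ∑ i, b i • coordFun V (i : E) = 0 := by
    ext v
    have hv : f (φ v) = 0 := by
      have : f (φ v) ∈ (LinearMap.range φ).map f :=
        Submodule.mem_map_of_mem (LinearMap.mem_range_self φ v)
      rwa [hfmap, Submodule.mem_bot] at this
    rw [hfx] at hv
    simpa [mul_comm, hφ, LinearMap.pi_apply] using hv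
  have hb0 := Fintype.linearIndependent_iff.1 hI b hcomb
  refine hf0 (LinearMap.ext fun x => ?_)
  rw [hfx]
  simp [hb0]

/-- Let K = s + V be a linear variety in F^E, I ⊆ E a set whose coordinate functionals are
linearly independent on V, and c ∈ F^I. Then K_I = K ∩ {x : x_e = c_e ∀ e ∈ I} is a
nonempty linear variety whose associated subspace is V_I = {x ∈ V : x_i = 0 ∀ i ∈ I},
and M(K_I) \ I = M(K) / I. -/
theorem varietyMatroid_slice_delete_eq_contract {F E : Type*} [Field F] [Fintype E]
    (V : Submodule F (E → F)) (s : E → F) (K : Set (E → F)) (hK : K = {x | x - s ∈ V})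
    (I : Set E) (hI : LinearIndependent F (fun i : I => coordFun V i)) (c : I → F)
    (VI : Submodule F (E → F)) (hVI : ∀ x, x ∈ VI ↔ x ∈ V ∧ ∀ i ∈ I, x i = 0)
    (M MI : Matroid E) (hM : IsVarietyMatroidOf V M) (hMI : IsVarietyMatroidOf VI MI) :
    (∃ s' : E → F, K ∩ {x | ∀ i : I, x (i : E) = c i} = {x | x - s' ∈ VI}) ∧
      MI.del I = M.con I := by
  constructor
  · obtain ⟨v, hv⟩ := coord_pi_surjective V I hI (fun i => c i - s (i : E))
    have hvi : ∀ i : I, (v : E → F) (i : E) = c i - s (i : E) := fun i => congr_fun hv i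
    refine ⟨s + (v : E → F), ?_⟩
    ext x
    simp only [hK, Set.mem_inter_iff, Set.mem_setOf_eq, hVI]
    constructor
    · rintro ⟨h1, h2⟩
      refine ⟨?_, fun i hi => ?_⟩
      · have heq : x - (s + (v : E → F)) = (x - s) - (v : E → F) := by abel
        rw [heq]; exact Submodule.sub_mem V h1 v.2
      · have := hvi ⟨i, hi⟩
        have h2' := h2 ⟨i, hi⟩
        simp only [Pi.sub_apply, Pi.add_apply]
        rw [h2', this]
        ring
    · rintro ⟨h1, h2⟩
      have h1' : x - s ∈ V := by
        have heq : x - s = (x - (s + (v : E → F))) + (v : E → F) := by abel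
        rw [heq]; exact Submodule.add_mem V h1 v.2
      refine ⟨h1', fun i => ?_⟩
      have h0 := h2 (i : E) i.2
      have hvi' := hvi i
      simp only [Pi.sub_apply, Pi.add_apply] at h0
      rw [hvi'] at h0
      linear_combination h0
  · have hMind : M.Indep I := (hM.2 I).2 hI
    apply Matroid.ext_indep
    · show (MI.del I).E = (M.con I).E
      rw [Matroid.del, Matroid.con, Matroid.restrict_ground_eq]
      rw [Matroid.dual_ground, Matroid.del, Matroid.restrict_ground_eq, Matroid.dual_ground]
      rw [hM.1, hMI.1]
    · intro X hX
      have hXE : X ⊆ Set.univ \ I := by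
        rwa [Matroid.del, Matroid.restrict_ground_eq, hMI.1] at hX
      have hdisj : Disjoint X I := Set.disjoint_left.2 fun a ha haI => (hXE ha).2 haI
      have key := coord_union_indep_iff V VI I hVI hI X hdisj
      rw [Matroid.del, Matroid.restrict_indep_iff, con_indep_iff' M hMind]
      constructor
      · rintro ⟨h, _⟩
        exact ⟨(hM.2 (X ∪ I)).2 (key.1 ((hMI.2 X).1 h)), by rwa [hM.1]⟩
      · rintro ⟨h, _⟩
        exact ⟨(hMI.2 X).2 (key.2 ((hM.2 (X ∪ I)).1 h)), by rwa [hMI.1]⟩
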